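/- Let R = R₀ ⊕ R₁ be a Z₂-graded commutative ring, and for x = a + r with a ∈ R₀ and r ∈ R₁ define N(x) = a² − r². Then R is an integral domain if and only if R is a Z₂-graded integral domain and N(x) = 0 implies x = 0 for all x ∈ R. -/

import Mathlib

/-- A `ℤ/2ℤ`-grading on a commutative ring `R`: additive subgroups `R0`, `R1` with
`R = R0 ⊕ R1` (internal direct sum) and `Rᵢ · Rⱼ ⊆ R_{i+j}`. -/
structure Z2Grading (R : Type*) [CommRing R] where
  R0 : AddSubgroup R
  R1 : AddSubgroup R
  one_mem : (1 : R) ∈ R0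
  mul_mem_00 : ∀ {a b : R}, a ∈ R0 → b ∈ R0 → a * b ∈ R0
  mul_mem_01 : ∀ {a b : R}, a ∈ R0 → b ∈ R1 → a * b ∈ R1
  mul_mem_11 : ∀ {a b : R}, a ∈ R1 → b ∈ R1 → a * b ∈ R0
  sup_eq_top : R0 ⊔ R1 = ⊤
  inf_eq_bot : R0 ⊓ R1 = ⊥

/-- The sum `S + T` of two subsets of `R`. -/
def setSum {R : Type*} [CommRing R] (S T : Set R) : Set R :=
  {z : R | ∃ a ∈ S, ∃ b ∈ T, z = a + b}

/-- The additive subgroup of `R` generated by the pairwise products of `S` and `T`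
(i.e. the product `S·T` of an ideal/submodule pair). -/
def mulSet {R : Type*} [CommRing R] (S T : Set R) : AddSubgroup R :=
  AddSubgroup.closure {x : R | ∃ a ∈ S, ∃ b ∈ T, x = a * b}

namespace Z2Grading

variable {R : Type*} [CommRing R] (G : Z2Grading R)

/-- The set of homogeneous elements of `R`, namely `R₀ ∪ R₁`. -/
def homogeneous : Set R := ↑G.R0 ∪ ↑G.R1

/-- `R₁²`, the ideal of `R₀` generated by the products of two elements of `R₁`. -/
def sq : AddSubgroup R := mulSet (↑G.R1) (↑G.R1)

/-- `R₁³ = R₁² · R₁`, an `R₀`-submodule of `R₁`. -/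
def cube : AddSubgroup R := mulSet (↑G.sq) (↑G.R1)

/-- `I` is an ideal of the subring `R₀` (viewed inside `R`). -/
def IsIdeal0 (I : AddSubgroup R) : Prop :=
  (I : Set R) ⊆ ↑G.R0 ∧ ∀ a ∈ G.R0, ∀ x ∈ I, a * x ∈ I

/-- `N` is an `R₀`-submodule of `R₁` (viewed inside `R`). -/
def IsSubmodule1 (N : AddSubgroup R) : Prop :=
  (N : Set R) ⊆ ↑G.R1 ∧ ∀ a ∈ G.R0, ∀ x ∈ N, a * x ∈ N

/-- The residual `(N :_{R₀} R₁) = {a ∈ R₀ : a·R₁ ⊆ N}`. -/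
def residual (N : AddSubgroup R) : AddSubgroup R where
  carrier := {a : R | a ∈ G.R0 ∧ ∀ r ∈ G.R1, a * r ∈ N}
  zero_mem' := ⟨G.R0.zero_mem, fun r _ => by simpa using N.zero_mem⟩
  add_mem' := by
    rintro a b ⟨ha0, ha⟩ ⟨hb0, hb⟩
    exact ⟨G.R0.add_mem ha0 hb0, fun r hr => by
      rw [add_mul]; exact N.add_mem (ha r hr) (hb r hr)⟩
  neg_mem' := by
    rintro a ⟨ha0, ha⟩
    exact ⟨G.R0.neg_mem ha0, fun r hr => by
      rw [neg_mul]; exact N.neg_mem (ha r hr)⟩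

/-- `J` is a `ℤ₂`-graded ideal of `R`: the homogeneous components of each of its
elements again belong to `J`, i.e. `J = (J ∩ R₀) ⊕ (J ∩ R₁)`. -/
def IsGradedIdeal (J : Ideal R) : Prop :=
  ∀ x ∈ J, ∃ a b : R, a ∈ G.R0 ∧ b ∈ G.R1 ∧ a ∈ J ∧ b ∈ J ∧ x = a + b

/-- `J` is a `ℤ₂`-graded prime ideal of `R`. -/
def IsGradedPrime (J : Ideal R) : Prop :=
  G.IsGradedIdeal J ∧ J ≠ ⊤ ∧
    ∀ r ∈ G.homogeneous, ∀ s ∈ G.homogeneous, r * s ∈ J → r ∈ J ∨ s ∈ J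

/-- `J` is a `ℤ₂`-graded maximal ideal of `R`. -/
def IsGradedMaximal (J : Ideal R) : Prop :=
  G.IsGradedIdeal J ∧ J ≠ ⊤ ∧
    ∀ J' : Ideal R, G.IsGradedIdeal J' → J ≤ J' → J' = J ∨ J' = ⊤

/-- `p` is a prime ideal of the subring `R₀`. -/
def IsPrime0 (p : AddSubgroup R) : Prop :=
  G.IsIdeal0 p ∧ (p : Set R) ≠ ↑G.R0 ∧
    ∀ a ∈ G.R0, ∀ b ∈ G.R0, a * b ∈ p → a ∈ p ∨ b ∈ p

/-- `p` is a maximal ideal of the subring `R₀`. -/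
def IsMaximal0 (p : AddSubgroup R) : Prop :=
  G.IsIdeal0 p ∧ (p : Set R) ≠ ↑G.R0 ∧
    ∀ I : AddSubgroup R, G.IsIdeal0 I → p ≤ I → (I : Set R) = ↑p ∨ (I : Set R) = ↑G.R0

/-- `N` is a prime `R₀`-submodule of `R₁`. -/
def IsPrimeSubmodule1 (N : AddSubgroup R) : Prop :=
  G.IsSubmodule1 N ∧ (N : Set R) ≠ ↑G.R1 ∧
    ∀ a ∈ G.R0, ∀ m ∈ G.R1, a * m ∈ N → a ∈ G.residual N ∨ m ∈ N

/-- `N` is a maximal (proper) `R₀`-submodule of `R₁`. -/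
def IsMaximalSubmodule1 (N : AddSubgroup R) : Prop :=
  G.IsSubmodule1 N ∧ (N : Set R) ≠ ↑G.R1 ∧
    ∀ N' : AddSubgroup R, G.IsSubmodule1 N' → N ≤ N' →
      (N' : Set R) = ↑N ∨ (N' : Set R) = ↑G.R1

/-- `R` is a `ℤ₂`-graded integral domain. -/
def IsGradedDomain : Prop :=
  (1 : R) ≠ 0 ∧
    ∀ r ∈ G.homogeneous, ∀ s ∈ G.homogeneous, r * s = 0 → r = 0 ∨ s = 0

/-- `R` is a `ℤ₂`-graded field. -/
def IsGradedField : Prop :=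
  (1 : R) ≠ 0 ∧ ∀ r ∈ G.homogeneous, r ≠ 0 → IsUnit r

/-- `R₀` as a subring of `R`. -/
def toSubring : Subring R where
  carrier := ↑G.R0
  one_mem' := G.one_mem
  mul_mem' := fun ha hb => G.mul_mem_00 ha hb
  zero_mem' := G.R0.zero_mem
  add_mem' := fun ha hb => G.R0.add_mem ha hb
  neg_mem' := fun ha => G.R0.neg_mem ha

/-- The Zariski topology on the homogeneous spectrum `Z₂Spec R`: closed sets are the
`V(I) = {P : I ⊆ P}` for `ℤ₂`-graded ideals `I`. -/
def gradedZariski : TopologicalSpace {Q : Ideal R // G.IsGradedPrime Q} :=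
  TopologicalSpace.generateFrom
    {U : Set {Q : Ideal R // G.IsGradedPrime Q} |
      ∃ I : Ideal R, G.IsGradedIdeal I ∧ U = {P | ¬ I ≤ P.1}}

end Z2Grading

/-! The norm `N(a + r) = a² − r²` is multiplicative: the homogeneous components of
`(a + r)(b + s)` are `ab + rs` and `as + rb`, and
`(a² − r²)(b² − s²) = (ab + rs)² − (as + rb)²`. So if `xy = 0` then both components
vanish, hence `N(x) N(y) = 0` with `N(x), N(y) ∈ R₀`, and gradedness together with the
norm condition gives `x = 0` or `y = 0`. Conversely, in a domain
`N(a + r) = (a + r)(a − r)`, and `a = r` forces `a ∈ R₀ ∩ R₁ = 0`. -/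

namespace Z2Grading

variable {R : Type*} [CommRing R] (G : Z2Grading R)

theorem exists_add_eq (x : R) : ∃ a ∈ G.R0, ∃ r ∈ G.R1, a + r = x :=
  AddSubgroup.mem_sup.mp (G.sup_eq_top ▸ AddSubgroup.mem_top x)

theorem eq_zero_of_mem_R0_of_mem_R1 {x : R} (h0 : x ∈ G.R0) (h1 : x ∈ G.R1) : x = 0 := by
  have hx : x ∈ G.R0 ⊓ G.R1 := ⟨h0, h1⟩
  rwa [G.inf_eq_bot, AddSubgroup.mem_bot] at hx

theorem eq_zero_of_add_eq_zero {a r : R} (ha : a ∈ G.R0) (hr : r ∈ G.R1) (h : a + r = 0) :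
    a = 0 := by
  refine G.eq_zero_of_mem_R0_of_mem_R1 ha ?_
  rw [eq_neg_of_add_eq_zero_left h]
  exact G.R1.neg_mem hr

theorem sq_sub_sq_mem_R0 {a r : R} (ha : a ∈ G.R0) (hr : r ∈ G.R1) : a ^ 2 - r ^ 2 ∈ G.R0 := by
  rw [pow_two, pow_two]
  exact G.R0.sub_mem (G.mul_mem_00 ha ha) (G.mul_mem_11 hr hr)

theorem sq_sub_sq_mul_sq_sub_sq_eq_zero {a r b s : R} (ha : a ∈ G.R0) (hr : r ∈ G.R1)
    (hb : b ∈ G.R0) (hs : s ∈ G.R1) (h : (a + r) * (b + s) = 0) :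
    (a ^ 2 - r ^ 2) * (b ^ 2 - s ^ 2) = 0 := by
  have even_mem : a * b + r * s ∈ G.R0 :=
    G.R0.add_mem (G.mul_mem_00 ha hb) (G.mul_mem_11 hr hs)
  have odd_mem : a * s + r * b ∈ G.R1 :=
    G.R1.add_mem (G.mul_mem_01 ha hs) (mul_comm b r ▸ G.mul_mem_01 hb hr)
  have hsum : (a * b + r * s) + (a * s + r * b) = 0 := by
    rw [← h]; ring
  have even_zero := G.eq_zero_of_add_eq_zero even_mem odd_mem hsum
  have odd_zero : a * s + r * b = 0 := by
    rwa [even_zero, zero_add] at hsum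
  calc (a ^ 2 - r ^ 2) * (b ^ 2 - s ^ 2)
      = (a * b + r * s) ^ 2 - (a * s + r * b) ^ 2 := by ring
    _ = 0 := by rw [even_zero, odd_zero]; ring

theorem noZeroDivisors_of_isGradedDomain (hG : G.IsGradedDomain)
    (hN : ∀ a r : R, a ∈ G.R0 → r ∈ G.R1 → a ^ 2 - r ^ 2 = 0 → a + r = 0) :
    NoZeroDivisors R where
  eq_zero_or_eq_zero_of_mul_eq_zero {x y} hxy := by
    obtain ⟨a, ha, r, hr, rfl⟩ := G.exists_add_eq x
    obtain ⟨b, hb, s, hs, rfl⟩ := G.exists_add_eq y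
    have hNx : a ^ 2 - r ^ 2 ∈ G.homogeneous := Or.inl (G.sq_sub_sq_mem_R0 ha hr)
    have hNy : b ^ 2 - s ^ 2 ∈ G.homogeneous := Or.inl (G.sq_sub_sq_mem_R0 hb hs)
    exact (hG.2 _ hNx _ hNy (G.sq_sub_sq_mul_sq_sub_sq_eq_zero ha hr hb hs hxy)).imp
      (hN a r ha hr) (hN b s hb hs)

theorem add_eq_zero_of_sq_sub_sq_eq_zero [IsDomain R] {a r : R} (ha : a ∈ G.R0)
    (hr : r ∈ G.R1) (h : a ^ 2 - r ^ 2 = 0) : a + r = 0 := by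
  rw [sq_sub_sq] at h
  rcases mul_eq_zero.mp h with h | h
  · exact h
  · have har : a = r := sub_eq_zero.mp h
    have ha0 : a = 0 := G.eq_zero_of_mem_R0_of_mem_R1 ha (har ▸ hr)
    rw [← har, ha0, add_zero]

end Z2Grading

/-- with `N(a + r) = a² − r²` for `a ∈ R₀`, `r ∈ R₁`, the ring `R` is an
integral domain iff `R` is a `ℤ₂`-graded integral domain and `N(x) = 0` implies `x = 0`. -/
theorem isDomain_iff_graded_and_norm {R : Type*} [CommRing R] (G : Z2Grading R) :
    IsDomain R ↔
      (G.IsGradedDomain ∧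
        ∀ a r : R, a ∈ G.R0 → r ∈ G.R1 → a ^ 2 - r ^ 2 = 0 → a + r = 0) := by
  constructor
  · intro _
    exact ⟨⟨one_ne_zero, fun r _ s _ => mul_eq_zero.mp⟩,
      fun a r => G.add_eq_zero_of_sq_sub_sq_eq_zero⟩
  · rintro ⟨hG, hN⟩
    have : Nontrivial R := ⟨⟨1, 0, hG.1⟩⟩
    have := G.noZeroDivisors_of_isGradedDomain hG hN
    exact NoZeroDivisors.to_isDomain R
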